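/- For the graph G that is the n-fold Cartesian product of the path graph on two vertices K2 (i.e., the n-dimensional hypercube graph), the Laplacian L(G) has exactly the eigenvalues {0, 2, 4, ..., 2n}, where the eigenvalue 2j occurs with multiplicity binomial(n, j). -/

import Mathlib

/-- The `n`-dimensional hypercube graph: vertices are length-`n` 0-1 vectors,
with an edge exactly between pairs at Hamming distance 1. -/
def hypercube (n : ℕ) : SimpleGraph (Fin n → Bool) where
  Adj x y := hammingDist x y = 1
  symm := ⟨by intro x y h; rwa [hammingDist_comm]⟩
  loopless := ⟨by intro x h; simp [hammingDist_self] at h⟩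

instance (n : ℕ) : DecidableRel (hypercube n).Adj := fun x y =>
  inferInstanceAs (Decidable (hammingDist x y = 1))

/-!
The Walsh characters `χ_S(x) = ∏ᵢ (-1)^(xᵢ Sᵢ)`, for `S : Fin n → Bool`, diagonalise the Laplacian
of the hypercube: flipping the coordinate `i` of `x` multiplies `χ_S(x)` by `(-1)^Sᵢ`, so
`L χ_S = 2 |S| χ_S`. The Walsh matrix squares to `2ⁿ • 1`, so it is invertible over `ℝ` and `L` is
similar to `diagonal (2 |S|)`. Finally there are `n.choose j` vectors `S` with `|S| = j`.
-/

open Finset Matrix Polynomial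

theorem Matrix.charpoly_eq_of_mul_eq_mul {n R : Type*} [Fintype n] [DecidableEq n] [CommRing R]
    {A B P : Matrix n n R} (hP : IsUnit P) (h : A * P = P * B) : A.charpoly = B.charpoly := by
  obtain ⟨U, rfl⟩ := hP
  calc A.charpoly = (U.val * B * U.val⁻¹).charpoly := by
        rw [← h, ← coe_units_inv, Units.mul_inv_cancel_right]
    _ = B.charpoly := charpoly_units_conj U B

section BoolFun
variable {ι : Type*} [Fintype ι] [DecidableEq ι]

theorem hammingDist_eq_one_iff_exists_update_not {x y : ι → Bool} :
    hammingDist x y = 1 ↔ ∃ i, y = Function.update x i (!x i) := by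
  simp only [hammingDist, card_eq_one, Finset.ext_iff, funext_iff, mem_filter, mem_univ, true_and,
    mem_singleton, Function.update_apply]
  refine exists_congr fun i => forall_congr' fun j => ?_
  rcases eq_or_ne j i with rfl | h <;> cases x j <;> cases y j <;> simp [*]

omit [Fintype ι] in
theorem update_not_injective (x : ι → Bool) :
    Function.Injective fun i => Function.update x i (!x i) := by
  intro i j h
  by_contra hij
  simpa [Function.update_of_ne hij] using congrFun h i

theorem card_filter_card_true_eq_choose (j : ℕ) :
    #{S : ι → Bool | #{i | S i} = j} = (Fintype.card ι).choose j := by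
  rw [← card_univ, ← card_powersetCard]
  refine card_nbij' (fun S => ({i | S i} : Finset ι)) (fun t i => decide (i ∈ t)) ?_ ?_ ?_ ?_
  · intro S hS
    simpa using hS
  · intro t ht
    simpa using (mem_powersetCard.mp ht).2
  all_goals intro _ _; ext; simp

theorem prod_apply_card_true_eq_prod_pow_choose {M : Type*} [CommMonoid M] (f : ℕ → M) :
    ∏ S : ι → Bool, f #{i | S i} =
      ∏ j ∈ range (Fintype.card ι + 1), f j ^ (Fintype.card ι).choose j := by
  rw [← prod_fiberwise_of_maps_to (g := fun S : ι → Bool => #{i | S i})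
    (t := range (Fintype.card ι + 1)) (fun S _ => mem_range_succ_iff.mpr (card_le_univ _))]
  refine prod_congr rfl fun j _ => ?_
  rw [prod_congr rfl fun S hS => congrArg f (mem_filter.mp hS).2, prod_const,
    card_filter_card_true_eq_choose]

end BoolFun

section Walsh
variable (R ι : Type*) [CommRing R] [Fintype ι] [DecidableEq ι]

def walshMatrix : Matrix (ι → Bool) (ι → Bool) R :=
  of fun x S => ∏ i, if x i && S i then -1 else 1

variable {R ι}

theorem walshMatrix_update_not (x S : ι → Bool) (i : ι) :
    walshMatrix R ι (Function.update x i (!x i)) S =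
      (if S i then -1 else 1) * walshMatrix R ι x S := by
  simp only [walshMatrix, of_apply]
  rw [← mul_prod_erase _ _ (mem_univ i), ← mul_prod_erase _ _ (mem_univ i), ← mul_assoc,
    Function.update_self]
  congr 1
  · cases x i <;> cases S i <;> simp
  · exact prod_congr rfl fun j hj => by rw [Function.update_of_ne (ne_of_mem_erase hj)]

theorem walshMatrix_mul_self :
    walshMatrix R ι * walshMatrix R ι = (2 ^ Fintype.card ι : R) • 1 := by
  have hfactor (a c : Bool) : ∑ b : Bool, (if a && b then -1 else 1) * (if b && c then -1 else 1) =
      if a = c then (2 : R) else 0 := by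
    cases a <;> cases c <;> norm_num
  ext x z
  calc (walshMatrix R ι * walshMatrix R ι) x z
      = ∑ S : ι → Bool, ∏ i, (if x i && S i then -1 else 1) * (if S i && z i then -1 else 1) := by
        simp only [walshMatrix, mul_apply, of_apply, prod_mul_distrib]
    _ = ∏ i, ∑ b : Bool, (if x i && b then -1 else 1) * (if b && z i then -1 else 1) :=
        (Fintype.prod_sum fun i b =>
          (if x i && b then -1 else 1) * (if b && z i then -1 else 1 : R)).symm
    _ = ((2 ^ Fintype.card ι : R) • (1 : Matrix (ι → Bool) (ι → Bool) R)) x z := by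
        simp only [hfactor]
        rw [Fintype.prod_ite_zero, prod_const, card_univ]
        simp only [← funext_iff]
        by_cases h : x = z <;> simp [h]

theorem isUnit_walshMatrix (h2 : IsUnit (2 : R)) : IsUnit (walshMatrix R ι) :=
  IsUnit.of_mul_eq_one ((((h2.pow _).unit⁻¹ : Rˣ) : R) • walshMatrix R ι) <| by
    rw [mul_smul_comm, walshMatrix_mul_self, smul_smul, IsUnit.val_inv_mul, one_smul]

end Walsh

section Hypercube
variable {R : Type*} [CommRing R] {n : ℕ}

theorem hypercube_neighborFinset (x : Fin n → Bool) :
    (hypercube n).neighborFinset x = univ.image fun i => Function.update x i (!x i) := by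
  ext y
  simp only [SimpleGraph.mem_neighborFinset, mem_image, mem_univ, true_and, eq_comm (b := y)]
  exact hammingDist_eq_one_iff_exists_update_not

theorem hypercube_degree (x : Fin n → Bool) : (hypercube n).degree x = n := by
  rw [← SimpleGraph.card_neighborFinset_eq_degree, hypercube_neighborFinset,
    card_image_of_injective _ (update_not_injective x), card_univ, Fintype.card_fin]

theorem hypercube_lapMatrix_mulVec_apply (v : (Fin n → Bool) → R) (x : Fin n → Bool) :
    ((hypercube n).lapMatrix R *ᵥ v) x = ∑ i, (v x - v (Function.update x i (!x i))) := by
  rw [SimpleGraph.lapMatrix_mulVec_apply, hypercube_degree, hypercube_neighborFinset,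
    sum_image fun i _ j _ h => update_not_injective x h, sum_sub_distrib, sum_const, card_univ,
    Fintype.card_fin, nsmul_eq_mul]

theorem hypercube_lapMatrix_mul_walshMatrix :
    (hypercube n).lapMatrix R * walshMatrix R (Fin n) =
      walshMatrix R (Fin n) * diagonal fun S => ((2 * #{i | S i} : ℕ) : R) := by
  ext x S
  have hsign (b : Bool) : 1 - (if b then -1 else 1 : R) = if b then 2 else 0 := by
    cases b <;> norm_num
  calc ((hypercube n).lapMatrix R * walshMatrix R (Fin n)) x S
      = ((hypercube n).lapMatrix R *ᵥ fun y => walshMatrix R (Fin n) y S) x := rfl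
    _ = ∑ i, (1 - (if S i then -1 else 1 : R)) * walshMatrix R (Fin n) x S := by
        simp only [hypercube_lapMatrix_mulVec_apply, walshMatrix_update_not, sub_mul, one_mul]
    _ = ((2 * #{i | S i} : ℕ) : R) * walshMatrix R (Fin n) x S := by
        simp only [hsign, ← sum_mul, ← sum_filter, sum_const, nsmul_eq_mul]
        push_cast
        ring
    _ = _ := by rw [mul_diagonal, mul_comm]

end Hypercube

/-- The Laplacian of the `n`-dimensional hypercube graph has exactly the eigenvalues
`0, 2, 4, …, 2n`, where `2j` occurs with multiplicity `n.choose j`: its characteristic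
polynomial is `∏_{j=0}^{n} (X - 2j)^(n choose j)`. -/
theorem hypercube_lapMatrix_charpoly (n : ℕ) :
    ((hypercube n).lapMatrix ℝ).charpoly =
      ∏ j ∈ Finset.range (n + 1),
        (Polynomial.X - Polynomial.C ((2 * j : ℕ) : ℝ)) ^ n.choose j := by
  rw [charpoly_eq_of_mul_eq_mul (isUnit_walshMatrix (by norm_num))
      hypercube_lapMatrix_mul_walshMatrix, charpoly_diagonal,
    prod_apply_card_true_eq_prod_pow_choose fun j => X - C ((2 * j : ℕ) : ℝ), Fintype.card_fin]
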